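/- Let r, H > 0 and a, b ∈ ℝ. There exists a unique real number x with x > min(a, b) satisfying (max(x−a, 0))² + (max(x−b, 0))² = (rH)², and this unique solution is given by the Godunov update: x = C(a, b). -/
import Mathlib


/-- The Godunov update for parameters `r, H`: the two-sided quadratic branch when
`|a - b| < r * H`, and the one-sided upwind branch otherwise. -/
noncomputable def godunov (r H a b : ℝ) : ℝ :=
  if |a - b| < r * H then (a + b + Real.sqrt (2 * r ^ 2 * H ^ 2 - (a - b) ^ 2)) / 2
  else min a b + r * H

private lemma godunov_mono (a b x y : ℝ) (hx : min a b < x) (hxy : x < y) :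
    max (x - a) 0 ^ 2 + max (x - b) 0 ^ 2 < max (y - a) 0 ^ 2 + max (y - b) 0 ^ 2 := by
  rcases min_lt_iff.mp hx with h | h
  · have h1' : max (x - a) 0 = x - a := max_eq_left (by linarith)
    have h2' : max (y - a) 0 = y - a := max_eq_left (by linarith)
    have hlt : (x - a) ^ 2 < (y - a) ^ 2 := by nlinarith
    have hle : max (x - b) 0 ^ 2 ≤ max (y - b) 0 ^ 2 :=
      pow_le_pow_left₀ (le_max_right _ _) (max_le_max (by linarith) le_rfl) 2
    rw [h1', h2']; linarith
  · have h1' : max (x - b) 0 = x - b := max_eq_left (by linarith)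
    have h2' : max (y - b) 0 = y - b := max_eq_left (by linarith)
    have hlt : (x - b) ^ 2 < (y - b) ^ 2 := by nlinarith
    have hle : max (x - a) 0 ^ 2 ≤ max (y - a) 0 ^ 2 :=
      pow_le_pow_left₀ (le_max_right _ _) (max_le_max (by linarith) le_rfl) 2
    rw [h1', h2']; linarith

private lemma godunov_sol (r H : ℝ) (hr : 0 < r) (hH : 0 < H) (a b : ℝ) :
    min a b < godunov r H a b ∧
      max (godunov r H a b - a) 0 ^ 2 + max (godunov r H a b - b) 0 ^ 2 = (r * H) ^ 2 := by
  have hrH : 0 < r * H := mul_pos hr hH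
  unfold godunov
  by_cases hcase : |a - b| < r * H
  · rw [if_pos hcase]
    have habs := abs_lt.mp hcase
    have hnn : 0 ≤ 2 * r ^ 2 * H ^ 2 - (a - b) ^ 2 := by nlinarith
    set s := Real.sqrt (2 * r ^ 2 * H ^ 2 - (a - b) ^ 2) with hs
    have hs2 : s ^ 2 = 2 * r ^ 2 * H ^ 2 - (a - b) ^ 2 := Real.sq_sqrt hnn
    have hsnn : 0 ≤ s := Real.sqrt_nonneg _
    have hsab : a - b < s := by nlinarith
    have hsba : b - a < s := by nlinarith
    have ha : 0 < (a + b + s) / 2 - a := by linarith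
    have hb : 0 < (a + b + s) / 2 - b := by linarith
    constructor
    · rcases min_le_left a b |>.lt_or_eq with h | h
      · calc min a b ≤ a := min_le_left a b
          _ < (a + b + s) / 2 := by linarith
      · calc min a b ≤ a := min_le_left a b
          _ < (a + b + s) / 2 := by linarith
    · rw [max_eq_left ha.le, max_eq_left hb.le]
      nlinarith
  · rw [if_neg hcase]
    push_neg at hcase
    constructor
    · linarith
    · rcases le_total a b with h | h
      · have hba : r * H ≤ b - a := by
          rwa [abs_sub_comm, abs_of_nonneg (by linarith)] at hcase
        rw [min_eq_left h]
        have h1 : max (a + r * H - a) 0 = r * H := by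
          rw [max_eq_left (by linarith)]; ring
        have h2 : max (a + r * H - b) 0 = 0 := max_eq_right (by linarith)
        rw [h1, h2]; ring
      · have hab : r * H ≤ a - b := by
          rwa [abs_of_nonneg (by linarith)] at hcase
        rw [min_eq_right h]
        have h1 : max (b + r * H - b) 0 = r * H := by
          rw [max_eq_left (by linarith)]; ring
        have h2 : max (b + r * H - a) 0 = 0 := max_eq_right (by linarith)
        rw [h1, h2]; ring

/-- There is a unique real `x > min a b` satisfying the upwind Godunov discretization
`(max (x-a) 0)² + (max (x-b) 0)² = (rH)²`, and this unique solution is `C(a, b)`. -/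
theorem godunov_unique_solution (r H : ℝ) (hr : 0 < r) (hH : 0 < H) (a b : ℝ) :
    (min a b < godunov r H a b ∧
      max (godunov r H a b - a) 0 ^ 2 + max (godunov r H a b - b) 0 ^ 2 = (r * H) ^ 2) ∧
    ∀ x : ℝ, min a b < x →
      max (x - a) 0 ^ 2 + max (x - b) 0 ^ 2 = (r * H) ^ 2 → x = godunov r H a b := by
  obtain ⟨hg1, hg2⟩ := godunov_sol r H hr hH a b
  refine ⟨⟨hg1, hg2⟩, fun x hx heq => ?_⟩
  rcases lt_trichotomy x (godunov r H a b) with h | h | h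
  · have := godunov_mono a b x (godunov r H a b) hx h
    rw [heq, hg2] at this; exact absurd this (lt_irrefl _)
  · exact h
  · have := godunov_mono a b (godunov r H a b) x hg1 h
    rw [heq, hg2] at this; exact absurd this (lt_irrefl _)
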